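/- arXiv:1109.1884 — 2 statements merged into one kernel-verified Lean document; each statement's English description precedes it below -/
import Mathlib

section
/- Assume K has characteristic 0 and let r ≥ 1 be an integer. With the hyperplane-section setup (points P_1, …, P_n in the hyperplane H: x_0 = 0 of P^{N+1}, with I their radical ideal in K[x_1, …, x_{N+1}] and Î their radical ideal in K[x_0, …, x_{N+1}]): if I^{(rN−(N−1))} ⊆ M^{(r−1)(N−1)} I^r, then Î^{(r(N+1)−N)} ⊆ M̂^{(r−1)N} Î^r. -/
open MvPolynomial

noncomputable section

/-- The ideal generated by all homogeneous forms vanishing at the point with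
coordinate vector `p`. -/
def homVanishingIdeal {K σ : Type*} [Field K] (p : σ → K) : Ideal (MvPolynomial σ K) :=
  Ideal.span {F : MvPolynomial σ K | (∃ d, F.IsHomogeneous d) ∧ MvPolynomial.eval p F = 0}

/-- The `m`-th symbolic power of the radical ideal of the finite set of points
with coordinate vectors `P i`: the intersection of the `m`-th powers of the
ideals of the individual points. -/
def symbPow {K σ ι : Type*} [Field K] (P : ι → σ → K) (m : ℕ) : Ideal (MvPolynomial σ K) :=
  ⨅ i, homVanishingIdeal (P i) ^ m

/-- The irrelevant maximal ideal `M = (x_0, …, x_N)`. -/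
def irrel (K σ : Type*) [Field K] : Ideal (MvPolynomial σ K) :=
  Ideal.span (Set.range (MvPolynomial.X : σ → MvPolynomial σ K))

/-- The coordinate vectors `P i` are nonzero and represent pairwise distinct
points of projective space (no two are proportional). -/
def ProjectivelyDistinct {K σ ι : Type*} [Field K] (P : ι → σ → K) : Prop :=
  (∀ i, P i ≠ 0) ∧ Pairwise fun i j => ∀ c : K, P i ≠ c • P j

/-- `α(J)`: the least degree of a nonzero homogeneous element of `J`. -/
def idealAlpha {K σ : Type*} [Field K] (J : Ideal (MvPolynomial σ K)) : ℕ :=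
  sInf {d : ℕ | ∃ F ∈ J, F ≠ 0 ∧ MvPolynomial.IsHomogeneous F d}

/-! Expand `F ∈ Î^{(b + 2r + 1)}` as `∑ x₀^k f_k` with `f_k` free of `x₀`. As the points lie on
`x₀ = 0`, `f_k ∈ I^{(b + 2r + 1 - k)}`. In characteristic zero Euler's identity gives
`I^{(s + 1)} ⊆ M I^{(s)}`, so for `k ≤ r` the hypothesis `I^{(b + r + 1)} ⊆ M^b I^{r + 1}` puts
`x₀^k f_k` into `M̂^{b + r} Î^{r + 1}`. For `k > r` the factor `x₀^{r + 1} ∈ Î^{r + 1}` splits off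
and `f_k ∈ M^{b + 2r + 1 - k}` supplies the remaining degree. The theorem is the case
`b = (r - 1)(N - 1)`, with `r - 1` in place of `r`. -/

theorem Ideal.IsHomogeneous.pow {ι σ A : Type*} [CommSemiring A] [DecidableEq ι] [AddMonoid ι]
    [SetLike σ A] [AddSubmonoidClass σ A] {𝒜 : ι → σ} [GradedRing 𝒜] {I : Ideal A}
    (hI : I.IsHomogeneous 𝒜) (m : ℕ) : (I ^ m).IsHomogeneous 𝒜 := by
  induction m with
  | zero => simpa only [pow_zero, Ideal.one_eq_top] using Ideal.IsHomogeneous.top 𝒜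
  | succ m ih => simpa only [pow_succ] using ih.mul hI

theorem Derivation.apply_mem_pow_of_mem_pow_succ {R A : Type*} [CommSemiring R] [CommRing A]
    [Algebra R A] (D : Derivation R A A) {I : Ideal A} {m : ℕ} {f : A} (hf : f ∈ I ^ (m + 1)) :
    D f ∈ I ^ m := by
  induction m generalizing f with
  | zero => simp
  | succ m ih =>
    rw [pow_succ] at hf
    refine Submodule.mul_induction_on hf (fun a ha b hb => ?_) fun x y hx hy => ?_
    · rw [D.leibniz, smul_eq_mul, smul_eq_mul, mul_comm b]
      exact add_mem (Ideal.mul_mem_right _ _ ha) (pow_succ I m ▸ Ideal.mul_mem_mul (ih ha) hb)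
    · exact D.map_add x y ▸ add_mem hx hy

section SymbolicPower

variable {K σ ι : Type*} [Field K]

attribute [local instance] MvPolynomial.gradedAlgebra

theorem irrel_le_ker_constantCoeff : irrel K σ ≤ RingHom.ker (constantCoeff (σ := σ) (R := K)) :=
  Ideal.span_le.mpr <| by rintro _ ⟨i, rfl⟩; simp

theorem homVanishingIdeal_le_irrel (p : σ → K) : homVanishingIdeal p ≤ irrel K σ := by
  refine Ideal.span_le.mpr fun F ⟨⟨d, hF⟩, hFp⟩ => ?_
  rcases eq_or_ne d 0 with rfl | hd
  · have hC : F = C (coeff 0 F) :=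
      totalDegree_eq_zero_iff_eq_C.mp (Nat.le_zero.mp hF.totalDegree_le)
    rw [hC, eval_C] at hFp
    rw [hC, hFp, C_0]
    exact zero_mem _
  · rw [SetLike.mem_coe, ← pow_one (irrel K σ)]
    refine (mem_pow_idealOfVars_iff 1 F).mpr fun x hx => ?_
    rw [Finsupp.degree_eq_weight_one]
    exact (Nat.one_le_iff_ne_zero.mpr hd).trans_eq (hF (mem_support_iff.mp hx)).symm

theorem homVanishingIdeal_isHomogeneous (p : σ → K) :
    (homVanishingIdeal p).IsHomogeneous (homogeneousSubmodule σ K) :=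
  Ideal.homogeneous_span _ _ fun _ hF => hF.1

theorem mem_symbPow {P : ι → σ → K} {m : ℕ} {F : MvPolynomial σ K} :
    F ∈ symbPow P m ↔ ∀ i, F ∈ homVanishingIdeal (P i) ^ m :=
  Submodule.mem_iInf _

theorem symbPow_isHomogeneous (P : ι → σ → K) (m : ℕ) :
    (symbPow P m).IsHomogeneous (homogeneousSubmodule σ K) :=
  Ideal.IsHomogeneous.iInf fun i => (homVanishingIdeal_isHomogeneous (P i)).pow m

theorem symbPow_le_irrel_pow [Nonempty ι] (P : ι → σ → K) (m : ℕ) :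
    symbPow P m ≤ irrel K σ ^ m :=
  (iInf_le _ (Classical.arbitrary ι)).trans (Ideal.pow_right_mono (homVanishingIdeal_le_irrel _) m)

theorem symbPow_succ_le_irrel_mul [Fintype σ] [CharZero K] [Nonempty ι] (P : ι → σ → K)
    (m : ℕ) : symbPow P (m + 1) ≤ irrel K σ * symbPow P m := by
  classical
  intro F hF
  rw [← F.sum_homogeneousComponent]
  refine sum_mem fun e _ => ?_
  have hG : homogeneousComponent e F ∈ symbPow P (m + 1) :=
    homogeneousComponent_mem_of_mem (symbPow_isHomogeneous P _) hF e
  rcases eq_or_ne e 0 with rfl | he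
  · have hG0 : homogeneousComponent 0 F = C (coeff 0 F) := homogeneousComponent_zero F
    have hirrel := Ideal.pow_le_self m.succ_ne_zero (symbPow_le_irrel_pow P _ hG)
    have hc : coeff 0 F = 0 := by simpa [hG0] using irrel_le_ker_constantCoeff hirrel
    rw [hG0, hc, C_0]
    exact zero_mem _
  · -- Euler: `e • G = ∑ X i * ∂G/∂X i`, and each `∂G/∂X i` has order `≥ m` at every point.
    have hsum : ∑ i, X i * pderiv i (homogeneousComponent e F) ∈ irrel K σ * symbPow P m :=
      sum_mem fun i _ => Ideal.mul_mem_mul (Ideal.subset_span ⟨i, rfl⟩) <|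
        mem_symbPow.mpr fun j => (pderiv i).apply_mem_pow_of_mem_pow_succ (mem_symbPow.mp hG j)
    rw [(homogeneousComponent_isHomogeneous e F).sum_X_mul_pderiv, ← Nat.cast_smul_eq_nsmul K,
      smul_eq_C_mul] at hsum
    have hG' := Ideal.mul_mem_left _ (C (e : K)⁻¹) hsum
    rwa [← mul_assoc, ← C_mul, inv_mul_cancel₀ (Nat.cast_ne_zero.mpr he), C_1, one_mul] at hG'

theorem symbPow_add_le_irrel_pow_mul [Fintype σ] [CharZero K] [Nonempty ι] (P : ι → σ → K)
    (m t : ℕ) : symbPow P (m + t) ≤ irrel K σ ^ t * symbPow P m := by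
  induction t with
  | zero => simp
  | succ t ih =>
    calc symbPow P (m + t + 1) ≤ irrel K σ * symbPow P (m + t) := symbPow_succ_le_irrel_mul P _
      _ ≤ irrel K σ * (irrel K σ ^ t * symbPow P m) := Ideal.mul_mono_right ih
      _ = irrel K σ ^ (t + 1) * symbPow P m := by rw [← mul_assoc, ← pow_succ']

end SymbolicPower

section Hyperplane

variable {K ι : Type*} [Field K] {n : ℕ}

theorem finSuccEquiv_rename_succ (a : MvPolynomial (Fin n) K) :
    finSuccEquiv K n (rename Fin.succ a) = Polynomial.C a := by
  induction a using MvPolynomial.induction_on with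
  | C c => simp [finSuccEquiv_apply]
  | add p q hp hq => simp [hp, hq]
  | mul_X p i hp => simp [hp, finSuccEquiv_X_succ]

theorem sum_rename_coeff_finSuccEquiv_mul_X_zero_pow (F : MvPolynomial (Fin (n + 1)) K) :
    ∑ k ∈ Finset.range ((finSuccEquiv K n F).natDegree + 1),
      rename Fin.succ ((finSuccEquiv K n F).coeff k) * X 0 ^ k = F := by
  apply (finSuccEquiv K n).injective
  conv_rhs => rw [(finSuccEquiv K n F).as_sum_range_C_mul_X_pow]
  simp [finSuccEquiv_rename_succ, finSuccEquiv_X_zero]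

theorem coeff_zero_finSuccEquiv_mem_homVanishingIdeal {p : Fin (n + 1) → K} (hp : p 0 = 0)
    {F : MvPolynomial (Fin (n + 1)) K} (hF : F ∈ homVanishingIdeal p) :
    (finSuccEquiv K n F).coeff 0 ∈ homVanishingIdeal (fun j => p j.succ) := by
  induction hF using Submodule.span_induction with
  | mem G hG =>
    obtain ⟨⟨d, hd⟩, hGp⟩ := hG
    refine Ideal.subset_span ⟨⟨d, hd.finSuccEquiv_coeff_isHomogeneous 0 d (zero_add d)⟩, ?_⟩
    have hG0 := eval_eq_eval_mv_eval' (Fin.tail p) (p 0) G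
    rw [Fin.cons_self_tail, hGp, hp, ← Polynomial.coeff_zero_eq_eval_zero,
      Polynomial.coeff_map] at hG0
    exact hG0.symm
  | zero => simp
  | add x y _ _ hx hy => simpa using add_mem hx hy
  | smul a x _ hx => simpa using Ideal.mul_mem_left _ _ hx

theorem coeff_finSuccEquiv_mem_homVanishingIdeal_pow {p : Fin (n + 1) → K} (hp : p 0 = 0)
    {m : ℕ} {F : MvPolynomial (Fin (n + 1)) K} (hF : F ∈ homVanishingIdeal p ^ m) (k : ℕ) :
    (finSuccEquiv K n F).coeff k ∈ homVanishingIdeal (fun j => p j.succ) ^ (m - k) := by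
  induction m generalizing F k with
  | zero => simp
  | succ m ih =>
    rw [pow_succ] at hF
    refine Submodule.mul_induction_on (C := fun (G : MvPolynomial (Fin (n + 1)) K) => ∀ k,
        (finSuccEquiv K n G).coeff k ∈ homVanishingIdeal (fun j : Fin n => p j.succ) ^ (m + 1 - k))
      hF ?_ ?_ k
    swap
    · intro x y hx hy k
      rw [map_add, Polynomial.coeff_add]
      exact add_mem (hx k) (hy k)
    intro a ha b hb k
    rw [map_mul, Polynomial.coeff_mul]
    refine sum_mem fun ij hij => ?_
    rw [Finset.HasAntidiagonal.mem_antidiagonal] at hij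
    have hb' : (finSuccEquiv K n b).coeff ij.2
        ∈ homVanishingIdeal (fun j => p j.succ) ^ (1 - ij.2) := by
      rcases ij with ⟨i, _ | j⟩
      · simpa using coeff_zero_finSuccEquiv_mem_homVanishingIdeal hp hb
      · simp
    have hab := Ideal.mul_mem_mul (ih ha ij.1) hb'
    rw [← pow_add] at hab
    exact Ideal.pow_le_pow_right (by omega) hab

theorem coeff_finSuccEquiv_mem_symbPow {P : ι → Fin (n + 1) → K} (hP : ∀ i, P i 0 = 0)
    {m : ℕ} {F : MvPolynomial (Fin (n + 1)) K} (hF : F ∈ symbPow P m) (k : ℕ) :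
    (finSuccEquiv K n F).coeff k ∈ symbPow (fun i j => P i j.succ) (m - k) :=
  mem_symbPow.mpr fun i =>
    coeff_finSuccEquiv_mem_homVanishingIdeal_pow (hP i) (mem_symbPow.mp hF i) k

theorem map_rename_succ_irrel_le :
    (irrel K (Fin n)).map (rename Fin.succ : MvPolynomial (Fin n) K →ₐ[K] _) ≤
      irrel K (Fin (n + 1)) := by
  rw [irrel, Ideal.map_span, Ideal.span_le]
  rintro _ ⟨_, ⟨i, rfl⟩, rfl⟩
  exact Ideal.subset_span ⟨i.succ, (rename_X _ _).symm⟩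

theorem map_rename_succ_homVanishingIdeal_le (p : Fin (n + 1) → K) :
    (homVanishingIdeal fun j => p j.succ).map (rename Fin.succ : MvPolynomial (Fin n) K →ₐ[K] _) ≤
      homVanishingIdeal p := by
  rw [homVanishingIdeal, Ideal.map_span, Ideal.span_le]
  rintro _ ⟨G, ⟨⟨d, hd⟩, hGp⟩, rfl⟩
  exact Ideal.subset_span ⟨⟨d, hd.rename_isHomogeneous⟩, by rwa [eval_rename]⟩

theorem map_rename_succ_symbPow_le (P : ι → Fin (n + 1) → K) (m : ℕ) :
    (symbPow (fun i j => P i j.succ) m).map (rename Fin.succ : MvPolynomial (Fin n) K →ₐ[K] _) ≤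
      symbPow P m :=
  le_iInf fun i => (Ideal.map_mono (iInf_le _ i)).trans <| by
    rw [Ideal.map_pow]
    exact Ideal.pow_right_mono (map_rename_succ_homVanishingIdeal_le (P i)) m

theorem X_zero_mem_symbPow_one {P : ι → Fin (n + 1) → K} (hP : ∀ i, P i 0 = 0) :
    (X 0 : MvPolynomial (Fin (n + 1)) K) ∈ symbPow P 1 :=
  mem_symbPow.mpr fun i => (pow_one (homVanishingIdeal (P i))).symm ▸
    Ideal.subset_span ⟨⟨1, isHomogeneous_X K 0⟩, by rw [eval_X, hP i]⟩

theorem rename_succ_mem_irrel_pow_mul_symbPow_one_pow (P : ι → Fin (n + 1) → K) (a r : ℕ)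
    {f : MvPolynomial (Fin n) K}
    (hf : f ∈ irrel K (Fin n) ^ a * symbPow (fun i j => P i j.succ) 1 ^ r) :
    rename Fin.succ f ∈ irrel K (Fin (n + 1)) ^ a * symbPow P 1 ^ r := by
  have hf' := Ideal.mem_map_of_mem (rename Fin.succ : MvPolynomial (Fin n) K →ₐ[K] _) hf
  rw [Ideal.map_mul, Ideal.map_pow, Ideal.map_pow] at hf'
  exact Ideal.mul_mono (Ideal.pow_right_mono map_rename_succ_irrel_le a)
    (Ideal.pow_right_mono (map_rename_succ_symbPow_le P 1) r) hf'

theorem symbPow_le_irrel_pow_mul_of_hyperplane [CharZero K] [Nonempty ι]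
    {P : ι → Fin (n + 2) → K} (hP : ∀ i, P i 0 = 0) {b r : ℕ}
    (h : symbPow (fun i j => P i j.succ) (b + r + 1) ≤
      irrel K (Fin (n + 1)) ^ b * symbPow (fun i j => P i j.succ) 1 ^ (r + 1)) :
    symbPow P (b + 2 * r + 1) ≤ irrel K (Fin (n + 2)) ^ (b + r) * symbPow P 1 ^ (r + 1) := by
  intro F hF
  rw [← sum_rename_coeff_finSuccEquiv_mul_X_zero_pow F]
  refine sum_mem fun k _ => ?_
  have hX : (X 0 : MvPolynomial (Fin (n + 2)) K) ∈ irrel K (Fin (n + 2)) :=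
    Ideal.subset_span ⟨0, rfl⟩
  have hf := coeff_finSuccEquiv_mem_symbPow hP hF k
  set f := (finSuccEquiv K (n + 1) F).coeff k
  rcases le_or_gt k r with hk | hk
  · rw [show b + 2 * r + 1 - k = b + r + 1 + (r - k) by omega] at hf
    have hf' := Ideal.mul_mono_right h (symbPow_add_le_irrel_pow_mul _ _ _ hf)
    rw [← mul_assoc, ← pow_add] at hf'
    have hfX := Ideal.mul_mem_mul (rename_succ_mem_irrel_pow_mul_symbPow_one_pow P _ _ hf')
      (Ideal.pow_mem_pow hX k)
    rwa [mul_right_comm, ← pow_add, show r - k + b + k = b + r by omega] at hfX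
  · have hf' : f ∈ irrel K (Fin (n + 1)) ^ (b + 2 * r + 1 - k) *
        symbPow (fun i j => P i j.succ) 1 ^ 0 := by
      simpa using symbPow_le_irrel_pow _ _ hf
    have hfX := Ideal.mul_mem_mul (rename_succ_mem_irrel_pow_mul_symbPow_one_pow P _ _ hf')
      (Ideal.pow_mem_pow hX (k - (r + 1)))
    rw [pow_zero, mul_one, ← pow_add] at hfX
    rw [← Nat.sub_add_cancel hk, pow_add (X 0 : MvPolynomial (Fin (n + 2)) K), ← mul_assoc]
    exact Ideal.mul_mem_mul (Ideal.pow_le_pow_right (by omega) hfX)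
      (Ideal.pow_mem_pow (X_zero_mem_symbPow_one hP) _)

end Hyperplane

theorem stmt15_general {K : Type*} [Field K] [CharZero K]
    {N n : ℕ} (hN : 1 ≤ N) (hn : 1 ≤ n)
    (P : Fin n → (Fin (N + 2) → K))
    (hinH : ∀ i, P i 0 = 0)
    (r : ℕ)
    (h : symbPow (fun i (j : Fin (N + 1)) => P i j.succ) (r * N - (N - 1)) ≤
      irrel K (Fin (N + 1)) ^ ((r - 1) * (N - 1)) *
        symbPow (fun i (j : Fin (N + 1)) => P i j.succ) 1 ^ r) :
    symbPow P (r * (N + 1) - N) ≤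
      irrel K (Fin (N + 2)) ^ ((r - 1) * N) * symbPow P 1 ^ r := by
  have : Nonempty (Fin n) := ⟨⟨0, hn⟩⟩
  obtain ⟨N, rfl⟩ : ∃ N', N = N' + 1 := ⟨N - 1, by omega⟩
  rcases r with _ | r
  · simp [symbPow]
  simp only [Nat.add_sub_cancel] at h ⊢
  rw [show (r + 1) * (N + 1) - N = r * N + r + 1 from Nat.sub_eq_of_eq_add (by ring)] at h
  rw [show (r + 1) * (N + 1 + 1) - (N + 1) = r * N + 2 * r + 1 from Nat.sub_eq_of_eq_add (by ring),
    show r * (N + 1) = r * N + r by ring]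
  exact symbPow_le_irrel_pow_mul_of_hyperplane hinH h

/-- Hyperplane section, char 0.  If `I^{(rN-(N-1))} ⊆ M^{(r-1)(N-1)} I^r`
in `K[x_1,…,x_{N+1}]`, then `Î^{(r(N+1)-N)} ⊆ M̂^{(r-1)N} Î^r` in `K[x_0,…,x_{N+1}]`. -/
theorem stmt15 {K : Type*} [Field K] [IsAlgClosed K] [CharZero K]
    {N n : ℕ} (hN : 1 ≤ N) (hn : 1 ≤ n)
    (P : Fin n → (Fin (N + 2) → K)) (hP : ProjectivelyDistinct P)
    (hinH : ∀ i, P i 0 = 0)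
    (r : ℕ) (hr : 1 ≤ r)
    (h : symbPow (fun i (j : Fin (N + 1)) => P i j.succ) (r * N - (N - 1)) ≤
      irrel K (Fin (N + 1)) ^ ((r - 1) * (N - 1)) *
        symbPow (fun i (j : Fin (N + 1)) => P i j.succ) 1 ^ r) :
    symbPow P (r * (N + 1) - N) ≤
      irrel K (Fin (N + 2)) ^ ((r - 1) * N) * symbPow P 1 ^ r :=
  stmt15_general hN hn P hinH r h
end
end

section
/- Assume K has characteristic 0 and let I ⊆ K[x_0, …, x_N] be the radical ideal of a finite nonempty set of distinct points in P^N. Let m, r ≥ 1 be integers. If any of the following holds: (i) m ≤ r ≤ N, or (ii) α(I^{(m)}) = m, or (iii) m ≤ r and r − m < N, then (α(I^{(m)}) + N − 1)/(m + N − 1) ≤ α(I^{(r)})/r. In particular, taking m = 1, if r ≤ N then (α(I) + N − 1)/N ≤ α(I^{(r)})/r. -/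
open MvPolynomial

noncomputable section

/-!
A partial derivative maps `I(P)^(m+1)` into `I(P)^m`, and in characteristic 0 Euler's identity
makes some partial derivative of a nonzero form of positive degree nonzero. Differentiating a form
of least degree in `I^(m+1)` therefore gives `α(I^(m)) + 1 ≤ α(I^(m+1))`, whence
`α(I^(m)) + (r - m) ≤ α(I^(r))` for `m ≤ r` and `m ≤ α(I^(m))`. With `a = α(I^(m))` and
`b = α(I^(r))`, cross-multiplying reduces the claim to `(a - m)(N - 1 - (r - m)) ≥ 0`; when
`a = m` the left-hand side is `1` and `r ≤ b` suffices.
-/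

theorem Derivation.map_mem_pow {R A : Type*} [CommSemiring R] [CommSemiring A] [Algebra R A]
    (D : Derivation R A A) {J : Ideal A} {k : ℕ} {a : A} (ha : a ∈ J ^ (k + 1)) :
    D a ∈ J ^ k := by
  induction k generalizing a with
  | zero => simp [Ideal.one_eq_top]
  | succ k ih =>
    rw [pow_succ] at ha
    refine Submodule.mul_induction_on ha (fun x hx y hy => ?_) (fun x y hx hy => ?_)
    · rw [D.leibniz, smul_eq_mul, smul_eq_mul, mul_comm y]
      refine Ideal.add_mem _ (Ideal.mul_mem_right _ _ hx) ?_
      rw [pow_succ]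
      exact Ideal.mul_mem_mul (ih hx) hy
    · rw [map_add]; exact Ideal.add_mem _ hx hy

namespace MvPolynomial

variable {R σ : Type*} [CommSemiring R]

theorem exists_pderiv_ne_zero [CharZero R] [IsDomain R] [Fintype σ] {F : MvPolynomial σ R}
    {d : ℕ} (hF : F.IsHomogeneous (d + 1)) (hF0 : F ≠ 0) : ∃ j, pderiv j F ≠ 0 := by
  by_contra! h
  have := hF.sum_X_mul_pderiv
  simp only [h, mul_zero, Finset.sum_const_zero] at this
  exact hF0 ((smul_eq_zero.1 this.symm).resolve_left (Nat.succ_ne_zero d))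

end MvPolynomial

section Points

variable {K σ ι : Type*} [Field K]

theorem homVanishingIdeal_le_ker_eval (p : σ → K) :
    homVanishingIdeal p ≤ RingHom.ker (eval p) :=
  Ideal.span_le.2 fun _ hF => hF.2

theorem eq_zero_of_isHomogeneous_zero_of_mem_pow {p : σ → K} {m : ℕ} (hm : m ≠ 0)
    {F : MvPolynomial σ K} (hF : F.IsHomogeneous 0) (hFp : F ∈ homVanishingIdeal p ^ m) :
    F = 0 := by
  rw [← totalDegree_zero_iff_isHomogeneous, totalDegree_eq_zero_iff_eq_C] at hF
  have hval : eval p F = 0 := homVanishingIdeal_le_ker_eval p (Ideal.pow_le_self hm hFp)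
  rw [hF, eval_C] at hval
  rw [hF, hval, map_zero]

theorem exists_isHomogeneous_one_mem_homVanishingIdeal [Nontrivial σ] {p : σ → K} (hp : p ≠ 0) :
    ∃ L ∈ homVanishingIdeal p, L ≠ 0 ∧ L.IsHomogeneous 1 := by
  classical
  obtain ⟨k, hk⟩ := Function.ne_iff.1 hp
  obtain ⟨j, hjk⟩ := exists_ne k
  have hL : (C (p k) * X j - C (p j) * X k : MvPolynomial σ K).IsHomogeneous 1 :=
    (isHomogeneous_C_mul_X _ _).sub (isHomogeneous_C_mul_X _ _)
  refine ⟨_, Ideal.subset_span ⟨⟨1, hL⟩, ?_⟩, fun h0 => hk ?_, hL⟩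
  · simp only [map_sub, map_mul, eval_C, eval_X]
    ring
  · simpa [coeff_X, Finsupp.single_eq_single_iff, hjk.symm] using
      congrArg (coeff (Finsupp.single j 1)) h0

theorem symbPow_zero (P : ι → σ → K) : symbPow P 0 = ⊤ := by
  simp [symbPow]

theorem exists_isHomogeneous_mem_symbPow [Fintype ι] [Nontrivial σ] {P : ι → σ → K}
    (hP : ∀ i, P i ≠ 0) (m : ℕ) :
    ∃ F ∈ symbPow P m, F ≠ 0 ∧ F.IsHomogeneous (Fintype.card ι * m) := by
  choose L hLP hL0 hL using fun i => exists_isHomogeneous_one_mem_homVanishingIdeal (hP i)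
  refine ⟨(∏ i, L i) ^ m, Ideal.mem_iInf.2 fun i => Ideal.pow_mem_pow ?_ m,
    pow_ne_zero _ (Finset.prod_ne_zero_iff.2 fun i _ => hL0 i), ?_⟩
  · obtain ⟨c, hc⟩ := Finset.dvd_prod_of_mem L (Finset.mem_univ i)
    exact hc ▸ Ideal.mul_mem_right _ _ (hLP i)
  · simpa using (IsHomogeneous.prod Finset.univ L (fun _ => 1) fun i _ => hL i).pow m

theorem pderiv_mem_symbPow {P : ι → σ → K} {m : ℕ} {F : MvPolynomial σ K}
    (hF : F ∈ symbPow P (m + 1)) (j : σ) : pderiv j F ∈ symbPow P m :=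
  Ideal.mem_iInf.2 fun i => (pderiv j).map_mem_pow (Ideal.mem_iInf.1 hF i)

end Points

section Alpha

variable {K σ : Type*} [Field K]

theorem idealAlpha_le {J : Ideal (MvPolynomial σ K)} {F : MvPolynomial σ K} {d : ℕ}
    (hFJ : F ∈ J) (hF0 : F ≠ 0) (hF : F.IsHomogeneous d) : idealAlpha J ≤ d :=
  Nat.sInf_le ⟨F, hFJ, hF0, hF⟩

theorem exists_isHomogeneous_idealAlpha {J : Ideal (MvPolynomial σ K)}
    {d : ℕ} (h : ∃ F ∈ J, F ≠ 0 ∧ F.IsHomogeneous d) :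
    ∃ F ∈ J, F ≠ 0 ∧ F.IsHomogeneous (idealAlpha J) :=
  Nat.sInf_mem (s := {d | ∃ F ∈ J, F ≠ 0 ∧ F.IsHomogeneous d}) ⟨d, h⟩

theorem idealAlpha_top : idealAlpha (⊤ : Ideal (MvPolynomial σ K)) = 0 :=
  Nat.le_zero.1 (idealAlpha_le Submodule.mem_top one_ne_zero (isHomogeneous_one σ K))

end Alpha

section SymbolicPowers

variable {K σ ι : Type*} [Field K] [CharZero K] [Fintype σ] [Nontrivial σ] [Fintype ι]
  [Nonempty ι] {P : ι → σ → K}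

theorem idealAlpha_symbPow_succ (hP : ∀ i, P i ≠ 0) (m : ℕ) :
    idealAlpha (symbPow P m) + 1 ≤ idealAlpha (symbPow P (m + 1)) := by
  obtain ⟨F, hFP, hF0, hF⟩ := exists_isHomogeneous_idealAlpha
    (exists_isHomogeneous_mem_symbPow hP (m + 1))
  obtain ⟨i⟩ := ‹Nonempty ι›
  rcases h : idealAlpha (symbPow P (m + 1)) with _ | d
  · rw [h] at hF
    exact absurd (eq_zero_of_isHomogeneous_zero_of_mem_pow m.succ_ne_zero hF
      (Ideal.mem_iInf.1 hFP i)) hF0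
  · rw [h] at hF
    obtain ⟨j, hj⟩ := exists_pderiv_ne_zero hF hF0
    simpa using idealAlpha_le (pderiv_mem_symbPow hFP j) hj hF.pderiv

theorem idealAlpha_symbPow_add (hP : ∀ i, P i ≠ 0) (m k : ℕ) :
    idealAlpha (symbPow P m) + k ≤ idealAlpha (symbPow P (m + k)) := by
  induction k with
  | zero => rfl
  | succ k ih => exact (Nat.add_le_add_right ih 1).trans (idealAlpha_symbPow_succ hP (m + k))

theorem le_idealAlpha_symbPow (hP : ∀ i, P i ≠ 0) (m : ℕ) : m ≤ idealAlpha (symbPow P m) := by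
  simpa [symbPow_zero, idealAlpha_top] using idealAlpha_symbPow_add hP 0 m

end SymbolicPowers

theorem add_div_add_le_div {α : Type*} [Field α] [LinearOrder α] [IsStrictOrderedRing α]
    {a b m r c : α} (hm : 0 < m) (ha : m ≤ a) (hab : a + (r - m) ≤ b) (hmr : m ≤ r)
    (hrc : r - m ≤ c) : (a + c) / (m + c) ≤ b / r := by
  rw [div_le_div_iff₀ (by linarith) (by linarith)]
  nlinarith

theorem div_le_idealAlpha_symbPow_div {K ι : Type*} [Field K] [CharZero K] [Fintype ι]
    [Nonempty ι] {N : ℕ} (hN : 1 ≤ N) {P : ι → Fin (N + 1) → K} (hP : ∀ i, P i ≠ 0) {m r : ℕ}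
    (hm : 1 ≤ m) (hr : 1 ≤ r) (h : idealAlpha (symbPow P m) = m ∨ (m ≤ r ∧ r - m < N)) :
    ((idealAlpha (symbPow P m) : ℚ) + N - 1) / (m + N - 1) ≤ idealAlpha (symbPow P r) / r := by
  have : Nontrivial (Fin (N + 1)) := Fin.nontrivial_iff_two_le.2 (by omega)
  rcases h with hα | ⟨hmr, hrm⟩
  · have hden : (0 : ℚ) < m + N - 1 := by
      have : (2 : ℚ) ≤ m + N := by exact_mod_cast Nat.add_le_add hm hN
      linarith
    rw [hα, div_self hden.ne', one_le_div (by exact_mod_cast hr)]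
    exact_mod_cast le_idealAlpha_symbPow hP r
  · have hstep := idealAlpha_symbPow_add hP m (r - m)
    rw [Nat.add_sub_cancel' hmr] at hstep
    simp only [add_sub_assoc]
    apply add_div_add_le_div (by exact_mod_cast hm)
      (by exact_mod_cast le_idealAlpha_symbPow hP m)
      (by rw [← Nat.cast_sub hmr]; exact_mod_cast hstep) (by exact_mod_cast hmr)
    rw [← Nat.cast_sub hmr, ← Nat.cast_pred hN]
    exact_mod_cast Nat.le_pred_of_lt hrm

theorem stmt18_general {K : Type*} [Field K] [CharZero K]
    {N n : ℕ} (hN : 1 ≤ N) (hn : 1 ≤ n)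
    (P : Fin n → (Fin (N + 1) → K)) (hP : ProjectivelyDistinct P) :
    (∀ m r : ℕ, 1 ≤ m → 1 ≤ r →
      ((m ≤ r ∧ r ≤ N) ∨ idealAlpha (symbPow P m) = m ∨ (m ≤ r ∧ r - m < N)) →
      ((idealAlpha (symbPow P m) : ℚ) + (N : ℚ) - 1) / ((m : ℚ) + (N : ℚ) - 1) ≤
        (idealAlpha (symbPow P r) : ℚ) / (r : ℚ)) ∧
    (∀ r : ℕ, 1 ≤ r → r ≤ N →
      ((idealAlpha (symbPow P 1) : ℚ) + (N : ℚ) - 1) / (N : ℚ) ≤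
        (idealAlpha (symbPow P r) : ℚ) / (r : ℚ)) := by
  have : Nonempty (Fin n) := ⟨⟨0, hn⟩⟩
  refine ⟨fun m r hm hr h => div_le_idealAlpha_symbPow_div hN hP.1 hm hr (by omega),
    fun r hr hrN => ?_⟩
  simpa using div_le_idealAlpha_symbPow_div hN hP.1 le_rfl hr (by omega)

/-- Char 0.  For the radical ideal `I` of a finite nonempty set of distinct
points of `P^N`, if `m, r ≥ 1` satisfy (i) `m ≤ r ≤ N`, or (ii) `α(I^{(m)}) = m`, or
(iii) `m ≤ r` and `r - m < N`, then `(α(I^{(m)}) + N - 1)/(m + N - 1) ≤ α(I^{(r)})/r`.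
In particular (m = 1), if `r ≤ N` then `(α(I) + N - 1)/N ≤ α(I^{(r)})/r`. -/
theorem stmt18 {K : Type*} [Field K] [IsAlgClosed K] [CharZero K]
    {N n : ℕ} (hN : 1 ≤ N) (hn : 1 ≤ n)
    (P : Fin n → (Fin (N + 1) → K)) (hP : ProjectivelyDistinct P) :
    (∀ m r : ℕ, 1 ≤ m → 1 ≤ r →
      ((m ≤ r ∧ r ≤ N) ∨ idealAlpha (symbPow P m) = m ∨ (m ≤ r ∧ r - m < N)) →
      ((idealAlpha (symbPow P m) : ℚ) + (N : ℚ) - 1) / ((m : ℚ) + (N : ℚ) - 1) ≤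
        (idealAlpha (symbPow P r) : ℚ) / (r : ℚ)) ∧
    (∀ r : ℕ, 1 ≤ r → r ≤ N →
      ((idealAlpha (symbPow P 1) : ℚ) + (N : ℚ) - 1) / (N : ℚ) ≤
        (idealAlpha (symbPow P r) : ℚ) / (r : ℚ)) :=
  stmt18_general hN hn P hP
end
end
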